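/- arXiv:1909.00857 — 3 statements merged into one kernel-verified Lean document; each statement's English description precedes it below -/
import Mathlib

section
/- Let M ∈ Mat_{n²}(C) ≅ gl(Mat_n) act on C[x_{ij}] by the derivation Σ m_{ip,jq} x_{ip} ∂_{jq}. If M · det = c · det for some scalar c, then M = A ⊗ I_n + I_n ⊗ B for some A, B ∈ Mat_n(C), where ⊗ denotes Kronecker product. -/
open MvPolynomial

/-- The generic `n × n` determinant polynomial. -/
noncomputable def detPoly (n : ℕ) : MvPolynomial (Fin n × Fin n) ℂ :=
  (Matrix.of fun i j : Fin n => (X (i, j) : MvPolynomial (Fin n × Fin n) ℂ)).det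

/-- The action of `M ∈ gl(Mat_n) = Mat_n ⊗ Mat_n` on polynomials in the matrix
entries, by the derivation `∑ M_{(i,p),(j,q)} x_{ip} ∂_{jq}`. -/
noncomputable def lieAct (n : ℕ) (M : Matrix (Fin n × Fin n) (Fin n × Fin n) ℂ)
    (f : MvPolynomial (Fin n × Fin n) ℂ) : MvPolynomial (Fin n × Fin n) ℂ :=
  ∑ ip : Fin n × Fin n, ∑ jq : Fin n × Fin n, M ip jq • (X ip * pderiv jq f)

namespace Stmt2Aux

open Finsupp
open scoped Classical

variable {n : ℕ}

noncomputable def mexp (σ : Equiv.Perm (Fin n)) : (Fin n × Fin n) →₀ ℕ :=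
  ∑ i : Fin n, Finsupp.single (i, σ i) 1

lemma mexp_apply (σ : Equiv.Perm (Fin n)) (w : Fin n × Fin n) :
    mexp σ w = if σ w.1 = w.2 then 1 else 0 := by
  classical
  rw [mexp, Finsupp.finset_sum_apply]
  have h : ∀ i : Fin n, (Finsupp.single ((i, σ i) : Fin n × Fin n) (1:ℕ)) w
      = if i = w.1 ∧ σ w.1 = w.2 then 1 else 0 := by
    intro i
    rw [Finsupp.single_apply]
    by_cases h1 : i = w.1
    · subst h1; simp [Prod.ext_iff]
    · simp [Prod.ext_iff, h1]
  simp only [h]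
  by_cases hw : σ w.1 = w.2 <;> simp [hw]

abbrev Tri (n : ℕ) := (Fin n × Fin n) × (Fin n × Fin n) × Equiv.Perm (Fin n)

def tcond (d : (Fin n × Fin n) →₀ ℕ) (t : Tri n) : Prop :=
  t.2.2 t.2.1.1 = t.2.1.2 ∧ Finsupp.single t.1 1 + mexp t.2.2 = d + Finsupp.single t.2.1 1

variable {n : ℕ}

lemma mexp_inj {σ τ : Equiv.Perm (Fin n)} (h : mexp σ = mexp τ) : σ = τ := by
  apply Equiv.ext; intro k
  have := congrArg (fun F => F ((k, σ k) : Fin n × Fin n)) h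
  simp only [mexp_apply] at this
  by_cases hh : τ k = σ k
  · exact hh.symm
  · simp [hh] at this

lemma monomial_prod (s : Finset (Fin n)) (f : Fin n → ((Fin n × Fin n) →₀ ℕ)) :
    (∏ i ∈ s, (monomial (f i) (1:ℂ))) = monomial (∑ i ∈ s, f i) 1 := by
  classical
  induction s using Finset.induction_on with
  | empty => simp [monomial_eq]
  | insert a s h ih => rw [Finset.prod_insert h, Finset.sum_insert h, ih, monomial_mul, one_mul]


lemma detPoly_eq : detPoly n
    = ∑ σ : Equiv.Perm (Fin n), monomial (mexp σ) (((Equiv.Perm.sign σ : ℤ)) : ℂ) := by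
  rw [detPoly, ← Matrix.det_transpose, Matrix.det_apply]
  refine Finset.sum_congr rfl fun σ _ => ?_
  have h1 : (∏ i : Fin n, (Matrix.of fun i j : Fin n =>
      (X (i, j) : MvPolynomial (Fin n × Fin n) ℂ)).transpose (σ i) i) = monomial (mexp σ) 1 := by
    rw [show (∏ i : Fin n, (Matrix.of fun i j : Fin n =>
      (X (i, j) : MvPolynomial (Fin n × Fin n) ℂ)).transpose (σ i) i)
      = ∏ i : Fin n, monomial (Finsupp.single (i, σ i) 1) (1:ℂ) from
      Finset.prod_congr rfl fun i _ => by simp [Matrix.transpose_apply, X]]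
    rw [monomial_prod, mexp]
  rw [h1]
  rw [smul_monomial]
  congr 1
  simp [Units.smul_def]

variable {n : ℕ}

noncomputable def rowOf (F : (Fin n × Fin n) →₀ ℕ) (k : Fin n) : ℕ := ∑ l, F (k,l)
noncomputable def colOf (F : (Fin n × Fin n) →₀ ℕ) (l : Fin n) : ℕ := ∑ k, F (k,l)

lemma rowOf_add (F G : (Fin n × Fin n) →₀ ℕ) (k : Fin n) :
    rowOf (F + G) k = rowOf F k + rowOf G k := by
  simp [rowOf, Finsupp.add_apply, Finset.sum_add_distrib]

lemma colOf_add (F G : (Fin n × Fin n) →₀ ℕ) (l : Fin n) :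
    colOf (F + G) l = colOf F l + colOf G l := by
  simp [colOf, Finsupp.add_apply, Finset.sum_add_distrib]

lemma rowOf_single (a : Fin n × Fin n) (k : Fin n) :
    rowOf (Finsupp.single a 1) k = if a.1 = k then 1 else 0 := by
  obtain ⟨a1, a2⟩ := a
  simp only [rowOf, Finsupp.single_apply, Prod.mk.injEq]
  by_cases h : a1 = k
  · subst h
    simp
  · simp [h]

lemma colOf_single (a : Fin n × Fin n) (l : Fin n) :
    colOf (Finsupp.single a 1) l = if a.2 = l then 1 else 0 := by
  obtain ⟨a1, a2⟩ := a
  simp only [colOf, Finsupp.single_apply, Prod.mk.injEq]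
  by_cases h : a2 = l
  · subst h
    simp
  · simp [h]

lemma rowOf_mexp (τ : Equiv.Perm (Fin n)) (k : Fin n) : rowOf (mexp τ) k = 1 := by
  simp [rowOf, mexp_apply]

lemma colOf_mexp (τ : Equiv.Perm (Fin n)) (l : Fin n) : colOf (mexp τ) l = 1 := by
  have h : ∀ k : Fin n, (τ k = l) = (k = τ⁻¹ l) := by
    intro k
    apply propext
    constructor
    · intro h; rw [← h]; simp
    · intro h; rw [h]; simp
  simp [colOf, mexp_apply, h]

lemma ind_pair {α : Type*} [DecidableEq α] {a b c d : α}
    (h : ∀ k, ((if a = k then (1:ℕ) else 0) + 1) + (if b = k then 1 else 0)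
      = ((if c = k then 1 else 0) + 1) + (if d = k then 1 else 0)) :
    (a = c ∧ b = d) ∨ (a = d ∧ b = c) := by
  rcases eq_or_ne a c with h1 | h1
  · subst h1
    left
    refine ⟨rfl, ?_⟩
    have hb := h b
    rcases eq_or_ne d b with h2 | h2
    · exact h2.symm
    · rcases eq_or_ne a b with h3 | h3
      · rw [if_pos h3, if_pos rfl, if_neg h2] at hb; omega
      · rw [if_neg h3, if_pos rfl, if_neg h2] at hb; omega
  · have ha := h a
    rw [if_pos rfl, if_neg (Ne.symm h1)] at ha
    rcases eq_or_ne d a with h2 | h2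
    · right
      refine ⟨h2.symm, ?_⟩
      have hc := h c
      rw [if_neg h1, if_pos rfl] at hc
      rcases eq_or_ne b c with h3 | h3
      · exact h3
      · rw [if_neg h3] at hc
        rcases eq_or_ne d c with h4 | h4
        · exact absurd (h2.symm.trans h4) h1
        · rw [if_neg h4] at hc; omega
    · rw [if_neg h2] at ha
      rcases eq_or_ne b a with h3 | h3
      · rw [if_pos h3] at ha; omega
      · rw [if_neg h3] at ha; omega

lemma ind_single {α : Type*} [DecidableEq α] {a c : α}
    (h : ∀ k, (if a = k then (1:ℕ) else 0) + 1 = 1 + (if c = k then 1 else 0)) : a = c := by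
  have ha := h a
  rcases eq_or_ne c a with h2 | h2
  · exact h2.symm
  · rw [if_pos rfl, if_neg h2] at ha; omega

lemma exists_perm {i j p q : Fin n} (hij : i ≠ j) (hpq : p ≠ q) :
    ∃ σ : Equiv.Perm (Fin n), σ i = p ∧ σ j = q := by
  refine ⟨Equiv.swap (Equiv.swap i p j) q * Equiv.swap i p, ?_, ?_⟩
  · rw [Equiv.Perm.mul_apply, Equiv.swap_apply_left, Equiv.swap_apply_of_ne_of_ne ?_ hpq]
    intro hco
    exact hij ((Equiv.swap i p).injective (by rw [Equiv.swap_apply_left, ← hco])).symm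
  · rw [Equiv.Perm.mul_apply, Equiv.swap_apply_left]

lemma single_apply_ne_fst {a : Fin n × Fin n} {k l : Fin n} (h : a.1 ≠ k) :
    (Finsupp.single a (1:ℕ)) (k,l) = 0 := by
  rw [Finsupp.single_apply, if_neg]
  intro hh
  exact h (congrArg Prod.fst hh)

lemma single_apply_ne_snd {a : Fin n × Fin n} {k l : Fin n} (h : a.2 ≠ l) :
    (Finsupp.single a (1:ℕ)) (k,l) = 0 := by
  rw [Finsupp.single_apply, if_neg]
  intro hh
  exact h (congrArg Prod.snd hh)

lemma mexp_apply_eq {τ : Equiv.Perm (Fin n)} {k l : Fin n} (h : τ k = l) : mexp τ (k,l) = 1 := by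
  rw [mexp_apply]
  exact if_pos h

lemma mexp_apply_ne {τ : Equiv.Perm (Fin n)} {k l : Fin n} (h : τ k ≠ l) : mexp τ (k,l) = 0 := by
  rw [mexp_apply]
  exact if_neg h

lemma classify1 {σ τ : Equiv.Perm (Fin n)} {ab cd : Fin n × Fin n}
    (E : Finsupp.single ab 1 + mexp τ = mexp σ + Finsupp.single cd 1) :
    τ = σ ∧ ab = cd := by
  have hrow : ∀ k, (if ab.1 = k then (1:ℕ) else 0) + 1 = 1 + (if cd.1 = k then 1 else 0) := by
    intro k
    have hE := congrArg (fun F => rowOf F k) E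
    rw [rowOf_add, rowOf_add, rowOf_single, rowOf_single, rowOf_mexp, rowOf_mexp] at hE
    exact hE
  have hcol : ∀ l, (if ab.2 = l then (1:ℕ) else 0) + 1 = 1 + (if cd.2 = l then 1 else 0) := by
    intro l
    have hE := congrArg (fun F => colOf F l) E
    rw [colOf_add, colOf_add, colOf_single, colOf_single, colOf_mexp, colOf_mexp] at hE
    exact hE
  have h1 : ab = cd := Prod.ext (ind_single hrow) (ind_single hcol)
  rw [h1, add_comm (mexp σ) (Finsupp.single cd 1)] at E
  exact ⟨mexp_inj (add_left_cancel E), h1⟩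

lemma classify2 {i j p q : Fin n} {σ τ : Equiv.Perm (Fin n)} {ab cd : Fin n × Fin n}
    (hij : i ≠ j) (hpq : p ≠ q)
    (E : Finsupp.single ab 1 + mexp τ + Finsupp.single ((j,q) : Fin n × Fin n) 1
       = Finsupp.single ((i,p) : Fin n × Fin n) 1 + mexp σ + Finsupp.single cd 1) :
    ab = (i,p) ∧ cd = (j,q) ∧ τ = σ := by
  have hrow : ∀ k, ((if ab.1 = k then (1:ℕ) else 0) + 1) + (if j = k then 1 else 0)
      = ((if i = k then 1 else 0) + 1) + (if cd.1 = k then 1 else 0) := by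
    intro k
    have hE := congrArg (fun F => rowOf F k) E
    rw [rowOf_add, rowOf_add, rowOf_add, rowOf_add, rowOf_single, rowOf_single,
      rowOf_single, rowOf_single, rowOf_mexp, rowOf_mexp] at hE
    exact hE
  have hcol : ∀ l, ((if ab.2 = l then (1:ℕ) else 0) + 1) + (if q = l then 1 else 0)
      = ((if p = l then 1 else 0) + 1) + (if cd.2 = l then 1 else 0) := by
    intro l
    have hE := congrArg (fun F => colOf F l) E
    rw [colOf_add, colOf_add, colOf_add, colOf_add, colOf_single, colOf_single,
      colOf_single, colOf_single, colOf_mexp, colOf_mexp] at hE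
    exact hE
  have h1 : ab.1 = i ∧ cd.1 = j := by
    rcases ind_pair hrow with ⟨ha, hb⟩ | ⟨_, hb⟩
    · exact ⟨ha, hb.symm⟩
    · exact absurd hb.symm hij
  have h2 : ab.2 = p ∧ cd.2 = q := by
    rcases ind_pair hcol with ⟨ha, hb⟩ | ⟨_, hb⟩
    · exact ⟨ha, hb.symm⟩
    · exact absurd hb.symm hpq
  have hab : ab = (i,p) := Prod.ext h1.1 h2.1
  have hcd : cd = (j,q) := Prod.ext h1.2 h2.2
  rw [hab, hcd] at E
  exact ⟨hab, hcd, mexp_inj (add_left_cancel (add_right_cancel E))⟩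

lemma classify3 {j k0 p q : Fin n} {σ τ : Equiv.Perm (Fin n)} {ab cd : Fin n × Fin n}
    (hjk : j ≠ k0) (hpq : p ≠ q) (hσj : σ j = q) (hσk : σ k0 = p)
    (ht : τ cd.1 = cd.2)
    (E : Finsupp.single ab 1 + mexp τ + Finsupp.single ((j,q) : Fin n × Fin n) 1
       = Finsupp.single ((j,p) : Fin n × Fin n) 1 + mexp σ + Finsupp.single cd 1) :
    (ab = (j,p) ∧ cd = (j,q) ∧ τ = σ)
    ∨ (ab = (k0,p) ∧ cd = (k0,q) ∧ τ = σ * Equiv.swap j k0) := by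
  have hrow : ∀ k, ((if ab.1 = k then (1:ℕ) else 0) + 1) + (if j = k then 1 else 0)
      = ((if j = k then 1 else 0) + 1) + (if cd.1 = k then 1 else 0) := by
    intro k
    have hE := congrArg (fun F => rowOf F k) E
    rw [rowOf_add, rowOf_add, rowOf_add, rowOf_add, rowOf_single, rowOf_single,
      rowOf_single, rowOf_single, rowOf_mexp, rowOf_mexp] at hE
    exact hE
  have hcol : ∀ l, ((if ab.2 = l then (1:ℕ) else 0) + 1) + (if q = l then 1 else 0)
      = ((if p = l then 1 else 0) + 1) + (if cd.2 = l then 1 else 0) := by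
    intro l
    have hE := congrArg (fun F => colOf F l) E
    rw [colOf_add, colOf_add, colOf_add, colOf_add, colOf_single, colOf_single,
      colOf_single, colOf_single, colOf_mexp, colOf_mexp] at hE
    exact hE
  have hr : ab.1 = cd.1 := by
    rcases ind_pair hrow with ⟨ha, hb⟩ | ⟨ha, _⟩
    · exact ha.trans hb
    · exact ha
  have h2 : ab.2 = p ∧ cd.2 = q := by
    rcases ind_pair hcol with ⟨ha, hb⟩ | ⟨_, hb⟩
    · exact ⟨ha, hb.symm⟩
    · exact absurd hb.symm hpq
  have hab : ab = (ab.1, p) := Prod.ext rfl h2.1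
  have hcd : cd = (ab.1, q) := Prod.ext hr.symm h2.2
  rw [hab, hcd] at E
  have ht' : τ ab.1 = q := by rw [hcd] at ht; exact ht
  rcases eq_or_ne ab.1 j with hrj | hrj
  · left
    rw [hrj] at E
    exact ⟨hab.trans (by rw [hrj]), hcd.trans (by rw [hrj]),
      mexp_inj (add_left_cancel (add_right_cancel E))⟩
  · right
    have hpt : ∀ w : Fin n × Fin n,
        (Finsupp.single ((ab.1, p) : Fin n × Fin n) 1) w + mexp τ w
          + (Finsupp.single ((j,q) : Fin n × Fin n) 1) w
        = (Finsupp.single ((j,p) : Fin n × Fin n) 1) w + mexp σ w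
          + (Finsupp.single ((ab.1, q) : Fin n × Fin n) 1) w := by
      intro w
      have hE := congrArg (fun F => F w) E
      simpa only [Finsupp.add_apply] using hE
    have hτσ : ∀ k, k ≠ ab.1 → k ≠ j → τ k = σ k := by
      intro k hkr hkj
      have hw := hpt (k, τ k)
      rw [single_apply_ne_fst (a := (ab.1, p)) (Ne.symm hkr),
        single_apply_ne_fst (a := ((j,q) : Fin n × Fin n)) (Ne.symm hkj),
        single_apply_ne_fst (a := ((j,p) : Fin n × Fin n)) (Ne.symm hkj),
        single_apply_ne_fst (a := (ab.1, q)) (Ne.symm hkr),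
        mexp_apply_eq (τ := τ) rfl] at hw
      rcases eq_or_ne (σ k) (τ k) with he | he
      · exact he.symm
      · rw [mexp_apply_ne he] at hw; omega
    have hτj : τ j = p := by
      have hw := hpt (j, p)
      rw [single_apply_ne_fst (a := (ab.1, p)) hrj,
        single_apply_ne_snd (a := ((j,q) : Fin n × Fin n)) (Ne.symm hpq),
        Finsupp.single_eq_same, mexp_apply_ne (τ := σ) (k := j) (l := p) (by rw [hσj]; exact Ne.symm hpq),
        single_apply_ne_fst (a := (ab.1, q)) hrj] at hw
      rcases eq_or_ne (τ j) p with he | he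
      · exact he
      · rw [mexp_apply_ne he] at hw; omega
    have hσr : σ ab.1 = p := by
      rcases eq_or_ne (σ ab.1) p with he | he
      · exact he
      · exfalso
        have hw := hpt (ab.1, σ ab.1)
        rw [single_apply_ne_snd (a := (ab.1, p)) (by exact Ne.symm he),
          mexp_apply_ne (τ := τ) (k := ab.1) (by rw [ht']; exact fun hh => hrj (σ.injective (hσj.trans hh)).symm),
          single_apply_ne_fst (a := ((j,q) : Fin n × Fin n)) (Ne.symm hrj),
          single_apply_ne_fst (a := ((j,p) : Fin n × Fin n)) (Ne.symm hrj),
          mexp_apply_eq (τ := σ) rfl,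
          single_apply_ne_snd (a := (ab.1, q)) (by exact fun hh => hrj (σ.injective (hσj.trans hh)).symm)] at hw
        omega
    have hrk0 : ab.1 = k0 := σ.injective (hσr.trans hσk.symm)
    have hτ : τ = σ * Equiv.swap j k0 := by
      apply Equiv.ext
      intro k
      rw [Equiv.Perm.mul_apply]
      rcases eq_or_ne k j with hkj | hkj
      · rw [hkj, Equiv.swap_apply_left, hσk, hτj]
      · rcases eq_or_ne k k0 with hkk | hkk
        · rw [hkk, Equiv.swap_apply_right, hσj, ← hrk0, ht']
        · rw [Equiv.swap_apply_of_ne_of_ne hkj hkk]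
          exact hτσ k (by rw [hrk0]; exact hkk) hkj
    exact ⟨hab.trans (by rw [hrk0]), hcd.trans (by rw [hrk0]), hτ⟩

lemma classify4 {i j p r : Fin n} {σ τ : Equiv.Perm (Fin n)} {ab cd : Fin n × Fin n}
    (hij : i ≠ j) (hpr : p ≠ r) (hσi : σ i = r) (hσj : σ j = p)
    (ht : τ cd.1 = cd.2)
    (E : Finsupp.single ab 1 + mexp τ + Finsupp.single ((j,p) : Fin n × Fin n) 1
       = Finsupp.single ((i,p) : Fin n × Fin n) 1 + mexp σ + Finsupp.single cd 1) :
    (ab = (i,p) ∧ cd = (j,p) ∧ τ = σ)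
    ∨ (ab = (i,r) ∧ cd = (j,r) ∧ τ = σ * Equiv.swap i j) := by
  have hrow : ∀ k, ((if ab.1 = k then (1:ℕ) else 0) + 1) + (if j = k then 1 else 0)
      = ((if i = k then 1 else 0) + 1) + (if cd.1 = k then 1 else 0) := by
    intro k
    have hE := congrArg (fun F => rowOf F k) E
    rw [rowOf_add, rowOf_add, rowOf_add, rowOf_add, rowOf_single, rowOf_single,
      rowOf_single, rowOf_single, rowOf_mexp, rowOf_mexp] at hE
    exact hE
  have hcol : ∀ l, ((if ab.2 = l then 1 else 0) + 1) + (if p = l then 1 else 0)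
      = ((if p = l then 1 else 0) + 1) + (if cd.2 = l then 1 else 0) := by
    intro l
    have hE := congrArg (fun F => colOf F l) E
    rw [colOf_add, colOf_add, colOf_add, colOf_add, colOf_single, colOf_single,
      colOf_single, colOf_single, colOf_mexp, colOf_mexp] at hE
    exact hE
  have h1 : ab.1 = i ∧ cd.1 = j := by
    rcases ind_pair hrow with ⟨ha, hb⟩ | ⟨_, hb⟩
    · exact ⟨ha, hb.symm⟩
    · exact absurd hb.symm hij
  have hs : ab.2 = cd.2 := by
    rcases ind_pair hcol with ⟨ha, hb⟩ | ⟨ha, _⟩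
    · exact ha.trans hb
    · exact ha
  have hab : ab = (i, ab.2) := Prod.ext h1.1 rfl
  have hcd : cd = (j, ab.2) := Prod.ext h1.2 hs.symm
  rw [hab, hcd] at E
  have ht' : τ j = ab.2 := by rw [hcd] at ht; exact ht
  rcases eq_or_ne ab.2 p with hsp | hsp
  · left
    rw [hsp] at E
    exact ⟨hab.trans (by rw [hsp]), hcd.trans (by rw [hsp]),
      mexp_inj (add_left_cancel (add_right_cancel E))⟩
  · right
    have hpt : ∀ w : Fin n × Fin n,
        (Finsupp.single ((i, ab.2) : Fin n × Fin n) 1) w + mexp τ w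
          + (Finsupp.single ((j,p) : Fin n × Fin n) 1) w
        = (Finsupp.single ((i,p) : Fin n × Fin n) 1) w + mexp σ w
          + (Finsupp.single ((j, ab.2) : Fin n × Fin n) 1) w := by
      intro w
      have hE := congrArg (fun F => F w) E
      simpa only [Finsupp.add_apply] using hE
    have hτσ : ∀ k, k ≠ i → k ≠ j → τ k = σ k := by
      intro k hki hkj
      have hw := hpt (k, τ k)
      rw [single_apply_ne_fst (a := ((i, ab.2) : Fin n × Fin n)) (Ne.symm hki),
        single_apply_ne_fst (a := ((j,p) : Fin n × Fin n)) (Ne.symm hkj),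
        single_apply_ne_fst (a := ((i,p) : Fin n × Fin n)) (Ne.symm hki),
        single_apply_ne_fst (a := ((j, ab.2) : Fin n × Fin n)) (Ne.symm hkj),
        mexp_apply_eq (τ := τ) rfl] at hw
      rcases eq_or_ne (σ k) (τ k) with he | he
      · exact he.symm
      · rw [mexp_apply_ne he] at hw; omega
    have hτi : τ i = p := by
      have hw := hpt (i, p)
      rw [single_apply_ne_snd (a := ((i, ab.2) : Fin n × Fin n)) hsp,
        single_apply_ne_fst (a := ((j,p) : Fin n × Fin n)) (Ne.symm hij),
        Finsupp.single_eq_same,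
        mexp_apply_ne (τ := σ) (k := i) (l := p) (by rw [hσi]; exact Ne.symm hpr),
        single_apply_ne_fst (a := ((j, ab.2) : Fin n × Fin n)) (Ne.symm hij)] at hw
      rcases eq_or_ne (τ i) p with he | he
      · exact he
      · rw [mexp_apply_ne he] at hw; omega
    have hsr : ab.2 = r := by
      have hσk1 : σ (σ⁻¹ ab.2) = ab.2 := σ.apply_symm_apply ab.2
      rcases eq_or_ne (σ⁻¹ ab.2) i with h1' | h1'
      · rw [h1', hσi] at hσk1; exact hσk1.symm
      · exfalso
        rcases eq_or_ne (σ⁻¹ ab.2) j with h2 | h2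
        · rw [h2, hσj] at hσk1; exact hsp hσk1.symm
        · have hh := hτσ _ h1' h2
          exact h2 (τ.injective ((hh.trans hσk1).trans ht'.symm))
    have hτ : τ = σ * Equiv.swap i j := by
      apply Equiv.ext
      intro k
      rw [Equiv.Perm.mul_apply]
      rcases eq_or_ne k i with hki | hki
      · rw [hki, Equiv.swap_apply_left, hσj, hτi]
      · rcases eq_or_ne k j with hkj | hkj
        · rw [hkj, Equiv.swap_apply_right, hσi, ht', hsr]
        · rw [Equiv.swap_apply_of_ne_of_ne hki hkj]
          exact hτσ k hki hkj
    exact ⟨hab.trans (by rw [hsr]), hcd.trans (by rw [hsr]), hτ⟩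

variable {n : ℕ}



lemma coeff_term (ab cd : Fin n × Fin n) (τ : Equiv.Perm (Fin n)) (d : (Fin n × Fin n) →₀ ℕ) :
    coeff d ((X ab : MvPolynomial (Fin n × Fin n) ℂ) * pderiv cd (monomial (mexp τ) (((Equiv.Perm.sign τ : ℤ)) : ℂ)))
    = if (τ cd.1 = cd.2 ∧ Finsupp.single ab 1 + mexp τ = d + Finsupp.single cd 1)
      then ((Equiv.Perm.sign τ : ℤ) : ℂ) else 0 := by
  rw [pderiv_monomial]
  rw [show (X ab : MvPolynomial (Fin n × Fin n) ℂ) = monomial (Finsupp.single ab 1) 1 from rfl]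
  rw [monomial_mul, one_mul, coeff_monomial]
  by_cases h1 : τ cd.1 = cd.2
  · have hle : Finsupp.single cd 1 ≤ mexp τ :=
      Finsupp.single_le_iff.mpr (by rw [mexp_apply, if_pos h1])
    have hc : Finsupp.single ab 1 + (mexp τ - Finsupp.single cd 1) = d
        ↔ Finsupp.single ab 1 + mexp τ = d + Finsupp.single cd 1 := by
      constructor
      · intro e
        rw [← e, add_assoc, tsub_add_cancel_of_le hle]
      · intro e
        have h2 : Finsupp.single ab 1 + (mexp τ - Finsupp.single cd 1) + Finsupp.single cd 1
            = d + Finsupp.single cd 1 := by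
          rw [add_assoc, tsub_add_cancel_of_le hle, e]
        exact add_right_cancel h2
    have hv : mexp τ cd = 1 := by rw [mexp_apply, if_pos h1]
    by_cases h2 : Finsupp.single ab 1 + (mexp τ - Finsupp.single cd 1) = d
    · rw [if_pos h2, if_pos ⟨h1, hc.mp h2⟩, hv]; norm_num
    · rw [if_neg h2, if_neg (fun hco => h2 (hc.mpr hco.2))]
  · have hv : mexp τ cd = 0 := by rw [mexp_apply, if_neg h1]
    rw [hv]
    simp [h1]

lemma coeff_lieAct (M : Matrix (Fin n × Fin n) (Fin n × Fin n) ℂ) (d : (Fin n × Fin n) →₀ ℕ) :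
    coeff d (lieAct n M (detPoly n)) =
    ∑ t : Tri n, if tcond d t then M t.1 t.2.1 * ((Equiv.Perm.sign t.2.2 : ℤ) : ℂ) else 0 := by
  rw [lieAct]
  simp only [coeff_sum, coeff_smul, smul_eq_mul]
  have hp : ∀ ab cd : Fin n × Fin n, coeff d ((X ab : MvPolynomial (Fin n × Fin n) ℂ) * pderiv cd (detPoly n))
      = ∑ τ : Equiv.Perm (Fin n), if (τ cd.1 = cd.2 ∧ Finsupp.single ab 1 + mexp τ = d + Finsupp.single cd 1)
        then ((Equiv.Perm.sign τ : ℤ) : ℂ) else 0 := by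
    intro ab cd
    have hps : (pderiv cd) (∑ σ : Equiv.Perm (Fin n), (monomial (mexp σ) (((Equiv.Perm.sign σ : ℤ)) : ℂ)))
        = ∑ σ : Equiv.Perm (Fin n), pderiv cd (monomial (mexp σ) (((Equiv.Perm.sign σ : ℤ)) : ℂ)) :=
      map_sum (pderiv cd) (fun σ : Equiv.Perm (Fin n) => monomial (mexp σ) (((Equiv.Perm.sign σ : ℤ)) : ℂ)) Finset.univ
    rw [detPoly_eq, hps, Finset.mul_sum, coeff_sum]
    exact Finset.sum_congr rfl fun τ _ => coeff_term ab cd τ d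
  simp only [hp]
  conv_rhs => rw [Fintype.sum_prod_type]
  refine Finset.sum_congr rfl fun ab _ => ?_
  conv_rhs => rw [Fintype.sum_prod_type]
  refine Finset.sum_congr rfl fun cd _ => ?_
  rw [Finset.mul_sum]
  refine Finset.sum_congr rfl fun τ _ => ?_
  simp only [tcond, mul_ite, mul_zero]
  congr 1

variable {n : ℕ}

lemma coeff_det (d : (Fin n × Fin n) →₀ ℕ) : coeff d (detPoly n)
    = ∑ τ : Equiv.Perm (Fin n), if mexp τ = d then ((Equiv.Perm.sign τ : ℤ) : ℂ) else 0 := by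
  rw [detPoly_eq, coeff_sum]
  exact Finset.sum_congr rfl fun τ _ => coeff_monomial _ _ _

lemma sign_ne_zero' (σ : Equiv.Perm (Fin n)) : ((Equiv.Perm.sign σ : ℤ) : ℂ) ≠ 0 := by
  simp

lemma mexp_swap (σ : Equiv.Perm (Fin n)) {a b : Fin n} (hab : a ≠ b) :
    mexp (σ * Equiv.swap a b) + Finsupp.single ((a, σ a) : Fin n × Fin n) 1
      + Finsupp.single ((b, σ b) : Fin n × Fin n) 1
    = mexp σ + Finsupp.single ((a, σ b) : Fin n × Fin n) 1
      + Finsupp.single ((b, σ a) : Fin n × Fin n) 1 := by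
  ext w
  obtain ⟨k, l⟩ := w
  simp only [Finsupp.add_apply, mexp_apply, Finsupp.single_apply, Equiv.Perm.mul_apply,
    Prod.mk.injEq]
  rcases eq_or_ne k a with hka | hka
  · subst hka
    simp only [Equiv.swap_apply_left]
    split_ifs <;> first | omega | simp_all
  · rcases eq_or_ne k b with hkb | hkb
    · subst hkb
      simp only [Equiv.swap_apply_right]
      split_ifs <;> first | omega | simp_all
    · simp only [Equiv.swap_apply_of_ne_of_ne hka hkb]
      split_ifs <;> first | omega | simp_all

section targets
variable {M : Matrix (Fin n × Fin n) (Fin n × Fin n) ℂ} {c : ℂ}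

lemma hco (h : lieAct n M (detPoly n) = c • detPoly n) (d : (Fin n × Fin n) →₀ ℕ) :
    (∑ t : Tri n, if tcond d t then M t.1 t.2.1 * ((Equiv.Perm.sign t.2.2 : ℤ) : ℂ) else 0)
    = c * ∑ τ : Equiv.Perm (Fin n), if mexp τ = d then ((Equiv.Perm.sign τ : ℤ) : ℂ) else 0 := by
  rw [← coeff_lieAct, h, coeff_smul, coeff_det, smul_eq_mul]

lemma L1 (h : lieAct n M (detPoly n) = c • detPoly n) (σ : Equiv.Perm (Fin n)) :
    ∑ k : Fin n, M (k, σ k) (k, σ k) = c := by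
  have hc := hco h (mexp σ)
  have hrhs : (∑ τ : Equiv.Perm (Fin n), if mexp τ = mexp σ then ((Equiv.Perm.sign τ : ℤ) : ℂ) else 0)
      = ((Equiv.Perm.sign σ : ℤ) : ℂ) := by
    rw [Finset.sum_eq_single σ]
    · rw [if_pos rfl]
    · intro τ _ hne
      exact if_neg fun he => hne (mexp_inj he)
    · intro hh; exact absurd (Finset.mem_univ σ) hh
  set emb : Fin n → Tri n := fun k => ((k, σ k), (k, σ k), σ) with hemb
  have hinj : ∀ x ∈ (Finset.univ : Finset (Fin n)), ∀ y ∈ Finset.univ, emb x = emb y → x = y := by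
    intro x _ y _ he
    exact congrArg (fun t : Tri n => t.1.1) he
  have hzero : ∀ t ∈ (Finset.univ : Finset (Tri n)), t ∉ Finset.image emb Finset.univ →
      (if tcond (mexp σ) t then M t.1 t.2.1 * ((Equiv.Perm.sign t.2.2 : ℤ) : ℂ) else 0) = 0 := by
    rintro ⟨ab, cd, τ⟩ _ hni
    rw [if_neg]
    rintro ⟨ht, hE⟩
    obtain ⟨hτ, habcd⟩ := classify1 hE
    apply hni
    rw [Finset.mem_image]
    refine ⟨cd.1, Finset.mem_univ _, ?_⟩
    dsimp only at ht hτ habcd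
    have hcd : cd = (cd.1, σ cd.1) := Prod.ext rfl (by rw [← ht, hτ])
    rw [hemb]
    dsimp only
    rw [← hcd, habcd, hτ]
  have hL : (∑ t : Tri n, if tcond (mexp σ) t then M t.1 t.2.1 * ((Equiv.Perm.sign t.2.2 : ℤ) : ℂ) else 0)
      = ∑ k : Fin n, M (k, σ k) (k, σ k) * ((Equiv.Perm.sign σ : ℤ) : ℂ) := by
    rw [← Finset.sum_subset (Finset.subset_univ (Finset.image emb Finset.univ)) hzero,
      Finset.sum_image hinj]
    refine Finset.sum_congr rfl fun k _ => ?_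
    rw [if_pos]
    constructor
    · rfl
    · exact add_comm _ _
  rw [hL, hrhs, ← Finset.sum_mul] at hc
  exact mul_right_cancel₀ (sign_ne_zero' σ) hc

lemma L2 (h : lieAct n M (detPoly n) = c • detPoly n) {i j p q : Fin n}
    (hij : i ≠ j) (hpq : p ≠ q) : M (i,p) (j,q) = 0 := by
  obtain ⟨σ, hσi, hσj⟩ := exists_perm hij hpq
  set d : (Fin n × Fin n) →₀ ℕ :=
    Finsupp.single ((i,p) : Fin n × Fin n) 1 + (mexp σ - Finsupp.single ((j,q) : Fin n × Fin n) 1)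
    with hdd
  have hle : Finsupp.single ((j,q) : Fin n × Fin n) 1 ≤ mexp σ :=
    Finsupp.single_le_iff.mpr (by rw [mexp_apply_eq hσj])
  have hd : d + Finsupp.single ((j,q) : Fin n × Fin n) 1
      = Finsupp.single ((i,p) : Fin n × Fin n) 1 + mexp σ := by
    rw [hdd, add_assoc, tsub_add_cancel_of_le hle]
  have hc := hco h d
  have hL : (∑ t : Tri n, if tcond d t then M t.1 t.2.1 * ((Equiv.Perm.sign t.2.2 : ℤ) : ℂ) else 0)
      = M (i,p) (j,q) * ((Equiv.Perm.sign σ : ℤ) : ℂ) := by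
    rw [Finset.sum_eq_single (((i,p), (j,q), σ) : Tri n)]
    · rw [if_pos ⟨hσj, hd.symm⟩]
    · rintro ⟨ab, cd, τ⟩ _ hne
      rw [if_neg]
      rintro ⟨ht, hE⟩
      dsimp only at ht hE
      have hE' : Finsupp.single ab 1 + mexp τ + Finsupp.single ((j,q) : Fin n × Fin n) 1
          = Finsupp.single ((i,p) : Fin n × Fin n) 1 + mexp σ + Finsupp.single cd 1 := by
        rw [hE, add_right_comm, hd]
      obtain ⟨h1, h2, h3⟩ := classify2 hij hpq hE'
      exact hne (by rw [h1, h2, h3])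
    · intro hni; exact absurd (Finset.mem_univ _) hni
  have hR : (∑ τ : Equiv.Perm (Fin n), if mexp τ = d then ((Equiv.Perm.sign τ : ℤ) : ℂ) else 0)
      = 0 := by
    refine Finset.sum_eq_zero fun τ _ => ?_
    rw [if_neg]
    intro he
    have hval := congrArg (fun F => F ((j, τ j) : Fin n × Fin n)) he
    rw [mexp_apply_eq (τ := τ) rfl, hdd] at hval
    rw [Finsupp.add_apply, Finsupp.tsub_apply,
      single_apply_ne_fst (a := ((i,p) : Fin n × Fin n)) hij] at hval
    rcases eq_or_ne (τ j) q with he2 | he2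
    · rw [he2, mexp_apply_eq (τ := σ) hσj, Finsupp.single_eq_same] at hval
      omega
    · rw [mexp_apply_ne (τ := σ) (by rw [hσj]; exact Ne.symm he2),
        single_apply_ne_snd (a := ((j,q) : Fin n × Fin n)) (Ne.symm he2)] at hval
      omega
  rw [hL, hR, mul_zero] at hc
  rcases mul_eq_zero.mp hc with h0 | h0
  · exact h0
  · exact absurd h0 (sign_ne_zero' σ)

lemma L3 (h : lieAct n M (detPoly n) = c • detPoly n) {j k0 p q : Fin n}
    (hjk : j ≠ k0) (hpq : p ≠ q) : M (j,p) (j,q) = M (k0,p) (k0,q) := by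
  obtain ⟨σ, hσj, hσk⟩ := exists_perm (p := q) (q := p) hjk (Ne.symm hpq)
  set d : (Fin n × Fin n) →₀ ℕ :=
    Finsupp.single ((j,p) : Fin n × Fin n) 1 + (mexp σ - Finsupp.single ((j,q) : Fin n × Fin n) 1)
    with hdd
  have hle : Finsupp.single ((j,q) : Fin n × Fin n) 1 ≤ mexp σ :=
    Finsupp.single_le_iff.mpr (by rw [mexp_apply_eq hσj])
  have hd : d + Finsupp.single ((j,q) : Fin n × Fin n) 1
      = Finsupp.single ((j,p) : Fin n × Fin n) 1 + mexp σ := by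
    rw [hdd, add_assoc, tsub_add_cancel_of_le hle]
  have hc := hco h d
  set t1 : Tri n := ((j,p), (j,q), σ) with ht1
  set t2 : Tri n := ((k0,p), (k0,q), σ * Equiv.swap j k0) with ht2
  have hne12 : t1 ≠ t2 := by
    intro he
    exact hjk (congrArg (fun t : Tri n => t.1.1) he)
  have hkey := mexp_swap σ hjk (b := k0)
  rw [hσj, hσk] at hkey
  have ht2c : tcond d t2 := by
    constructor
    · show (σ * Equiv.swap j k0) k0 = q
      rw [Equiv.Perm.mul_apply, Equiv.swap_apply_right, hσj]
    · show Finsupp.single ((k0,p) : Fin n × Fin n) 1 + mexp (σ * Equiv.swap j k0)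
        = d + Finsupp.single ((k0,q) : Fin n × Fin n) 1
      apply add_right_cancel (b := Finsupp.single ((j,q) : Fin n × Fin n) 1)
      rw [add_right_comm d, hd]
      calc Finsupp.single ((k0,p) : Fin n × Fin n) 1 + mexp (σ * Equiv.swap j k0)
            + Finsupp.single ((j,q) : Fin n × Fin n) 1
          = mexp (σ * Equiv.swap j k0) + Finsupp.single ((j,q) : Fin n × Fin n) 1
            + Finsupp.single ((k0,p) : Fin n × Fin n) 1 := by abel
        _ = mexp σ + Finsupp.single ((j,p) : Fin n × Fin n) 1
            + Finsupp.single ((k0,q) : Fin n × Fin n) 1 := hkey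
        _ = Finsupp.single ((j,p) : Fin n × Fin n) 1 + mexp σ
            + Finsupp.single ((k0,q) : Fin n × Fin n) 1 := by abel
  have hL : (∑ t : Tri n, if tcond d t then M t.1 t.2.1 * ((Equiv.Perm.sign t.2.2 : ℤ) : ℂ) else 0)
      = M (j,p) (j,q) * ((Equiv.Perm.sign σ : ℤ) : ℂ)
        + M (k0,p) (k0,q) * ((Equiv.Perm.sign (σ * Equiv.swap j k0) : ℤ) : ℂ) := by
    rw [← Finset.sum_subset (Finset.subset_univ ({t1, t2} : Finset (Tri n)))]
    · rw [Finset.sum_pair hne12, if_pos ⟨hσj, hd.symm⟩, if_pos ht2c]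
    · rintro ⟨ab, cd, τ⟩ _ hni
      rw [if_neg]
      rintro ⟨ht, hE⟩
      dsimp only at ht hE
      have hE' : Finsupp.single ab 1 + mexp τ + Finsupp.single ((j,q) : Fin n × Fin n) 1
          = Finsupp.single ((j,p) : Fin n × Fin n) 1 + mexp σ + Finsupp.single cd 1 := by
        rw [hE, add_right_comm, hd]
      apply hni
      rcases classify3 hjk hpq hσj hσk ht hE' with ⟨h1, h2, h3⟩ | ⟨h1, h2, h3⟩
      · rw [Finset.mem_insert]; left; rw [h1, h2, h3]
      · rw [Finset.mem_insert, Finset.mem_singleton]; right; rw [h1, h2, h3]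
  have hR : (∑ τ : Equiv.Perm (Fin n), if mexp τ = d then ((Equiv.Perm.sign τ : ℤ) : ℂ) else 0)
      = 0 := by
    refine Finset.sum_eq_zero fun τ _ => ?_
    rw [if_neg]
    intro he
    have hval := congrArg (fun F => F ((τ⁻¹ q, q) : Fin n × Fin n)) he
    rw [mexp_apply_eq (τ := τ) (k := τ⁻¹ q) (τ.apply_symm_apply q), hdd, Finsupp.add_apply,
      Finsupp.tsub_apply,
      single_apply_ne_snd (a := ((j,p) : Fin n × Fin n)) hpq] at hval
    rcases eq_or_ne (τ⁻¹ q) j with he2 | he2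
    · rw [he2, mexp_apply_eq (τ := σ) hσj, Finsupp.single_eq_same] at hval
      omega
    · rw [mexp_apply_ne (τ := σ) (fun hh => he2 (σ.injective (hh.trans hσj.symm))),
        single_apply_ne_fst (a := ((j,q) : Fin n × Fin n)) (Ne.symm he2)] at hval
      omega
  have hsign : ((Equiv.Perm.sign (σ * Equiv.swap j k0) : ℤ) : ℂ)
      = -((Equiv.Perm.sign σ : ℤ) : ℂ) := by
    rw [Equiv.Perm.sign_mul, Equiv.Perm.sign_swap hjk]
    push_cast
    ring
  rw [hL, hR, mul_zero, hsign] at hc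
  have hc2 : (M (j,p) (j,q) - M (k0,p) (k0,q)) * ((Equiv.Perm.sign σ : ℤ) : ℂ) = 0 := by
    linear_combination hc
  rcases mul_eq_zero.mp hc2 with h0 | h0
  · exact sub_eq_zero.mp h0
  · exact absurd h0 (sign_ne_zero' σ)

lemma L4 (h : lieAct n M (detPoly n) = c • detPoly n) {i j p r : Fin n}
    (hij : i ≠ j) (hpr : p ≠ r) : M (i,p) (j,p) = M (i,r) (j,r) := by
  obtain ⟨σ, hσi, hσj⟩ := exists_perm (p := r) (q := p) hij (Ne.symm hpr)
  set d : (Fin n × Fin n) →₀ ℕ :=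
    Finsupp.single ((i,p) : Fin n × Fin n) 1 + (mexp σ - Finsupp.single ((j,p) : Fin n × Fin n) 1)
    with hdd
  have hle : Finsupp.single ((j,p) : Fin n × Fin n) 1 ≤ mexp σ :=
    Finsupp.single_le_iff.mpr (by rw [mexp_apply_eq hσj])
  have hd : d + Finsupp.single ((j,p) : Fin n × Fin n) 1
      = Finsupp.single ((i,p) : Fin n × Fin n) 1 + mexp σ := by
    rw [hdd, add_assoc, tsub_add_cancel_of_le hle]
  have hc := hco h d
  set t1 : Tri n := ((i,p), (j,p), σ) with ht1
  set t2 : Tri n := ((i,r), (j,r), σ * Equiv.swap i j) with ht2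
  have hne12 : t1 ≠ t2 := by
    intro he
    exact hpr (congrArg (fun t : Tri n => t.1.2) he)
  have hkey := mexp_swap σ hij (b := j)
  rw [hσi, hσj] at hkey
  have ht2c : tcond d t2 := by
    constructor
    · show (σ * Equiv.swap i j) j = r
      rw [Equiv.Perm.mul_apply, Equiv.swap_apply_right, hσi]
    · show Finsupp.single ((i,r) : Fin n × Fin n) 1 + mexp (σ * Equiv.swap i j)
        = d + Finsupp.single ((j,r) : Fin n × Fin n) 1
      apply add_right_cancel (b := Finsupp.single ((j,p) : Fin n × Fin n) 1)
      rw [add_right_comm d, hd]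
      calc Finsupp.single ((i,r) : Fin n × Fin n) 1 + mexp (σ * Equiv.swap i j)
            + Finsupp.single ((j,p) : Fin n × Fin n) 1
          = mexp (σ * Equiv.swap i j) + Finsupp.single ((i,r) : Fin n × Fin n) 1
            + Finsupp.single ((j,p) : Fin n × Fin n) 1 := by abel
        _ = mexp σ + Finsupp.single ((i,p) : Fin n × Fin n) 1
            + Finsupp.single ((j,r) : Fin n × Fin n) 1 := hkey
        _ = Finsupp.single ((i,p) : Fin n × Fin n) 1 + mexp σ
            + Finsupp.single ((j,r) : Fin n × Fin n) 1 := by abel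
  have hL : (∑ t : Tri n, if tcond d t then M t.1 t.2.1 * ((Equiv.Perm.sign t.2.2 : ℤ) : ℂ) else 0)
      = M (i,p) (j,p) * ((Equiv.Perm.sign σ : ℤ) : ℂ)
        + M (i,r) (j,r) * ((Equiv.Perm.sign (σ * Equiv.swap i j) : ℤ) : ℂ) := by
    rw [← Finset.sum_subset (Finset.subset_univ ({t1, t2} : Finset (Tri n)))]
    · rw [Finset.sum_pair hne12, if_pos ⟨hσj, hd.symm⟩, if_pos ht2c]
    · rintro ⟨ab, cd, τ⟩ _ hni
      rw [if_neg]
      rintro ⟨ht, hE⟩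
      dsimp only at ht hE
      have hE' : Finsupp.single ab 1 + mexp τ + Finsupp.single ((j,p) : Fin n × Fin n) 1
          = Finsupp.single ((i,p) : Fin n × Fin n) 1 + mexp σ + Finsupp.single cd 1 := by
        rw [hE, add_right_comm, hd]
      apply hni
      rcases classify4 hij hpr hσi hσj ht hE' with ⟨h1, h2, h3⟩ | ⟨h1, h2, h3⟩
      · rw [Finset.mem_insert]; left; rw [h1, h2, h3]
      · rw [Finset.mem_insert, Finset.mem_singleton]; right; rw [h1, h2, h3]
  have hR : (∑ τ : Equiv.Perm (Fin n), if mexp τ = d then ((Equiv.Perm.sign τ : ℤ) : ℂ) else 0)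
      = 0 := by
    refine Finset.sum_eq_zero fun τ _ => ?_
    rw [if_neg]
    intro he
    have hval := congrArg (fun F => F ((j, τ j) : Fin n × Fin n)) he
    rw [mexp_apply_eq (τ := τ) rfl, hdd, Finsupp.add_apply, Finsupp.tsub_apply,
      single_apply_ne_fst (a := ((i,p) : Fin n × Fin n)) hij] at hval
    rcases eq_or_ne (τ j) p with he2 | he2
    · rw [he2, mexp_apply_eq (τ := σ) hσj, Finsupp.single_eq_same] at hval
      omega
    · rw [mexp_apply_ne (τ := σ) (by rw [hσj]; exact Ne.symm he2),
        single_apply_ne_snd (a := ((j,p) : Fin n × Fin n)) (Ne.symm he2)] at hval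
      omega
  have hsign : ((Equiv.Perm.sign (σ * Equiv.swap i j) : ℤ) : ℂ)
      = -((Equiv.Perm.sign σ : ℤ) : ℂ) := by
    rw [Equiv.Perm.sign_mul, Equiv.Perm.sign_swap hij]
    push_cast
    ring
  rw [hL, hR, mul_zero, hsign] at hc
  have hc2 : (M (i,p) (j,p) - M (i,r) (j,r)) * ((Equiv.Perm.sign σ : ℤ) : ℂ) = 0 := by
    linear_combination hc
  rcases mul_eq_zero.mp hc2 with h0 | h0
  · exact sub_eq_zero.mp h0
  · exact absurd h0 (sign_ne_zero' σ)

lemma Ldiag (h : lieAct n M (detPoly n) = c • detPoly n) (z i p : Fin n) :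
    M (i,p) (i,p) + M (z,z) (z,z) = M (i,z) (i,z) + M (z,p) (z,p) := by
  rcases eq_or_ne i z with hiz | hiz
  · rw [hiz, add_comm]
  · rcases eq_or_ne p z with hpz | hpz
    · rw [hpz]
    · set σ1 := Equiv.swap i p with hσ1
      have hσ1i : σ1 i = p := Equiv.swap_apply_left i p
      have hσ1z : σ1 z = z := Equiv.swap_apply_of_ne_of_ne (Ne.symm hiz) (Ne.symm hpz)
      set σ2 := σ1 * Equiv.swap i z with hσ2
      have hσ2i : σ2 i = z := by rw [hσ2, Equiv.Perm.mul_apply, Equiv.swap_apply_left, hσ1z]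
      have hσ2z : σ2 z = p := by rw [hσ2, Equiv.Perm.mul_apply, Equiv.swap_apply_right, hσ1i]
      have hσ2k : ∀ k, k ≠ i → k ≠ z → σ2 k = σ1 k := fun k hki hkz => by
        rw [hσ2, Equiv.Perm.mul_apply, Equiv.swap_apply_of_ne_of_ne hki hkz]
      have e1 := L1 h σ1
      have e2 := L1 h σ2
      have e3 : (∑ k : Fin n, (M (k, σ1 k) (k, σ1 k) - M (k, σ2 k) (k, σ2 k))) = 0 := by
        rw [Finset.sum_sub_distrib, e1, e2, sub_self]
      have e4 : (∑ k ∈ ({i, z} : Finset (Fin n)),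
          (M (k, σ1 k) (k, σ1 k) - M (k, σ2 k) (k, σ2 k))) = 0 := by
        rw [Finset.sum_subset (Finset.subset_univ _) ?_]
        · exact e3
        · intro k _ hk
          simp only [Finset.mem_insert, Finset.mem_singleton] at hk
          push_neg at hk
          rw [hσ2k k hk.1 hk.2, sub_self]
      rw [Finset.sum_pair hiz, hσ1i, hσ1z, hσ2i, hσ2z] at e4
      linear_combination e4


end targets
end Stmt2Aux

open Stmt2Aux in
theorem stmt_2 (n : ℕ) (M : Matrix (Fin n × Fin n) (Fin n × Fin n) ℂ) (c : ℂ)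
    (h : lieAct n M (detPoly n) = c • detPoly n) :
    ∃ A B : Matrix (Fin n) (Fin n) ℂ,
      M = Matrix.kroneckerMap (· * ·) A (1 : Matrix (Fin n) (Fin n) ℂ)
        + Matrix.kroneckerMap (· * ·) (1 : Matrix (Fin n) (Fin n) ℂ) B := by
  rcases Nat.eq_zero_or_pos n with h0 | hpos
  · subst h0
    refine ⟨0, 0, ?_⟩
    ext x y
    exact absurd x.1.2 (Nat.not_lt_zero _)
  · set z : Fin n := ⟨0, hpos⟩ with hz
    refine ⟨fun i j => M (i,z) (j,z),
      fun p q => M (z,p) (z,q) - if p = q then M (z,z) (z,z) else 0, ?_⟩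
    ext ⟨i, p⟩ ⟨j, q⟩
    simp only [Matrix.add_apply, Matrix.kroneckerMap, Matrix.of_apply,
      Matrix.one_apply]
    rcases eq_or_ne i j with hij | hij
    · rcases eq_or_ne p q with hpq | hpq
      · subst hij; subst hpq
        rw [if_pos rfl, if_pos rfl, if_pos rfl]
        linear_combination Ldiag h z i p
      · subst hij
        rw [if_neg hpq, if_pos rfl, mul_zero, one_mul, zero_add, if_neg hpq, sub_zero]
        rcases eq_or_ne i z with hiz | hiz
        · rw [hiz]
        · exact L3 h hiz hpq
    · rcases eq_or_ne p q with hpq | hpq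
      · subst hpq
        rw [if_pos rfl, if_neg hij, mul_one, zero_mul, add_zero]
        rcases eq_or_ne p z with hpz | hpz
        · rw [hpz]
        · exact L4 h hij hpz
      · rw [if_neg hpq, if_neg hij, mul_zero, zero_mul, add_zero]
        exact L2 h hij hpq
end

section
/- Let i ≠ j and let M ∈ Mat_n(C). Consider the derivation D = Σ_{p,q} M_{pq} x_{ip} ∂_{jq} on C[x_{kl}]. Then D(det) = 0 if and only if M = κ I_n for some scalar κ. -/
open MvPolynomial

theorem pderiv_finset_prod' {σ : Type*} [DecidableEq σ] {ι : Type*} [DecidableEq ι] (d : σ)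
    (s : Finset ι) (f : ι → MvPolynomial σ ℂ) :
    pderiv d (∏ k ∈ s, f k) = ∑ k ∈ s, pderiv d (f k) * ∏ l ∈ s.erase k, f l := by
  induction s using Finset.induction_on with
  | empty => simp
  | @insert a s ha ih =>
    rw [Finset.prod_insert ha, pderiv_mul, ih, Finset.sum_insert ha, Finset.erase_insert ha,
      Finset.mul_sum]
    congr 1
    refine Finset.sum_congr rfl fun k hk => ?_
    have hak : a ≠ k := fun h => ha (h ▸ hk)
    have has : a ∉ s.erase k := fun h => ha (Finset.mem_of_mem_erase h)
    rw [Finset.erase_insert_of_ne hak, Finset.prod_insert has]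
    ring

theorem eval_pderiv_detPoly {n : ℕ} (A : Fin n × Fin n → ℂ) (j q : Fin n) :
    eval A (pderiv (j, q) (detPoly n)) =
      ((Matrix.of fun k l => A (k, l)).updateRow j (Pi.single q 1)).det := by
  rw [detPoly, Matrix.det_apply, map_sum, map_sum, Matrix.det_apply]
  refine Finset.sum_congr rfl fun σ _ => ?_
  rw [Units.smul_def, Units.smul_def, map_zsmul, map_zsmul]
  congr 1
  simp only [Matrix.of_apply]
  rw [pderiv_finset_prod', map_sum]
  by_cases hσ : σ q = j
  · rw [Finset.sum_eq_single q (fun k _ hk =>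
      by rw [pderiv_X_of_ne (fun h => hk (congrArg Prod.snd h)), zero_mul, map_zero])
      (fun h => absurd (Finset.mem_univ q) h)]
    have h1 : pderiv (j, q) (X (σ q, q) : MvPolynomial (Fin n × Fin n) ℂ) = 1 := by
      rw [show ((σ q, q) : Fin n × Fin n) = (j, q) by rw [hσ], pderiv_X_self]
    rw [h1, one_mul, eval_prod, ← Finset.mul_prod_erase _ _ (Finset.mem_univ q), hσ,
      Matrix.updateRow_self, Pi.single_eq_same]
    rw [one_mul]
    refine Finset.prod_congr rfl fun l hl => ?_
    have hlq : l ≠ q := Finset.ne_of_mem_erase hl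
    have : σ l ≠ j := fun h => hlq (σ.injective (h.trans hσ.symm))
    rw [Matrix.updateRow_ne this, Matrix.of_apply, eval_X]
  · rw [Finset.sum_eq_zero fun k _ => ?_, Finset.prod_eq_zero (Finset.mem_univ (σ.symm j)) ?_]
    · rw [Equiv.apply_symm_apply, Matrix.updateRow_self,
        Pi.single_eq_of_ne (fun h => hσ ((congrArg σ h).symm.trans (σ.apply_symm_apply j))) ]
    · have : ((σ k, k) : Fin n × Fin n) ≠ (j, q) := by
        intro h
        rcases Prod.mk.injEq .. ▸ h with ⟨h1, h2⟩
        exact hσ (h2 ▸ h1)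
      rw [pderiv_X_of_ne this, zero_mul, map_zero]

theorem det_updateRow_expand {n : ℕ} (B : Matrix (Fin n) (Fin n) ℂ) (j : Fin n) (v : Fin n → ℂ) :
    (B.updateRow j v).det = ∑ q, v q * (B.updateRow j (Pi.single q 1)).det := by
  have key : ∀ (s : Finset (Fin n)) (w : Fin n → Fin n → ℂ),
      (B.updateRow j (∑ q ∈ s, w q)).det = ∑ q ∈ s, (B.updateRow j (w q)).det := by
    intro s
    induction s using Finset.induction_on with
    | empty => intro w; simpa using Matrix.det_eq_zero_of_row_eq_zero j (by simp)
    | @insert a s ha ih =>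
      intro w
      rw [Finset.sum_insert ha, Matrix.det_updateRow_add, ih, Finset.sum_insert ha]
  have hv : v = ∑ q, (fun q' => v q' • (Pi.single q' 1 : Fin n → ℂ)) q := by
    ext l
    simp [Pi.single_apply, Finset.sum_ite_eq']
  conv_lhs => rw [hv, key]
  refine Finset.sum_congr rfl fun q _ => ?_
  exact Matrix.det_updateRow_smul B j (v q) (Pi.single q 1)

/-- The key evaluation formula. -/
theorem eval_main {n : ℕ} (i j : Fin n) (M : Matrix (Fin n) (Fin n) ℂ)
    (A : Fin n × Fin n → ℂ) :
    eval A (∑ p : Fin n, ∑ q : Fin n, M p q • (X (i, p) * pderiv (j, q) (detPoly n))) =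
      ((Matrix.of fun k l => A (k, l)).updateRow j (fun l => ∑ p, M p l * A (i, p))).det := by
  rw [det_updateRow_expand, map_sum]
  simp only [map_sum]
  rw [Finset.sum_comm]
  refine Finset.sum_congr rfl fun q _ => ?_
  rw [Finset.sum_mul]
  refine Finset.sum_congr rfl fun p _ => ?_
  rw [smul_eq_C_mul, eval_mul, eval_mul, eval_C, eval_X, eval_pderiv_detPoly]
  ring


theorem permMatrix_apply' {n : ℕ} (σ : Equiv.Perm (Fin n)) (k l : Fin n) :
    (σ.permMatrix ℂ) k l = if l = σ k then 1 else 0 := by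
  simp [Equiv.Perm.permMatrix, PEquiv.toMatrix_apply, Equiv.toPEquiv_apply, eq_comm]

theorem exists_perm' {n : ℕ} {i j p q : Fin n} (hij : i ≠ j) (hpq : p ≠ q) :
    ∃ σ : Equiv.Perm (Fin n), σ i = p ∧ σ j = q := by
  have h1 : p ≠ Equiv.swap i p j := fun h =>
    hij ((Equiv.swap i p).injective ((Equiv.swap_apply_left i p).trans h))
  refine ⟨(Equiv.swap i p).trans (Equiv.swap (Equiv.swap i p j) q), ?_, ?_⟩
  · simp only [Equiv.trans_apply, Equiv.swap_apply_left]
    exact Equiv.swap_apply_of_ne_of_ne h1 hpq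
  · simp only [Equiv.trans_apply, Equiv.swap_apply_left]

theorem updateRow_comm' {n : ℕ} (B : Matrix (Fin n) (Fin n) ℂ) {i j : Fin n} (hij : i ≠ j)
    (u v : Fin n → ℂ) :
    (B.updateRow i u).updateRow j v = (B.updateRow j v).updateRow i u := by
  ext k l
  by_cases h1 : k = i
  · subst h1
    simp only [Matrix.updateRow_self, Matrix.updateRow_ne hij]
  · by_cases h2 : k = j
    · subst h2
      simp only [Matrix.updateRow_self, Matrix.updateRow_ne (Ne.symm hij)]
    · simp only [Matrix.updateRow_ne h1, Matrix.updateRow_ne h2]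

theorem stmt_4 (n : ℕ) (hn : 2 ≤ n) (i j : Fin n) (hij : i ≠ j)
    (M : Matrix (Fin n) (Fin n) ℂ) :
    (∑ p : Fin n, ∑ q : Fin n, M p q • (X (i, p) * pderiv (j, q) (detPoly n))) = 0
      ↔ ∃ κ : ℂ, M = κ • (1 : Matrix (Fin n) (Fin n) ℂ) := by
  constructor
  · intro h
    have hev : ∀ A : Fin n × Fin n → ℂ,
        ((Matrix.of fun k l => A (k, l)).updateRow j (fun l => ∑ p, M p l * A (i, p))).det
          = 0 := by
      intro A
      rw [← eval_main i j M A, h, map_zero]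
    -- off-diagonal entries vanish
    have hoff : ∀ p q : Fin n, p ≠ q → M p q = 0 := by
      intro p q hpq
      obtain ⟨σ, hσi, hσj⟩ := exists_perm' hij hpq
      set P : Matrix (Fin n) (Fin n) ℂ := σ.permMatrix ℂ with hP
      have h0 := hev fun kl => P kl.1 kl.2
      have hA : (Matrix.of fun k l => P (k, l).1 (k, l).2) = P := rfl
      rw [hA] at h0
      have hw : (fun l => ∑ p', M p' l * P i p') = fun l => M p l := by
        funext l
        rw [Finset.sum_eq_single p]
        · rw [hP, permMatrix_apply', hσi, if_pos rfl, mul_one]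
        · intro p' _ hp'
          rw [hP, permMatrix_apply', hσi, if_neg hp', mul_zero]
        · exact fun h => absurd (Finset.mem_univ p) h
      rw [hw, det_updateRow_expand] at h0
      have hPj : (Pi.single q 1 : Fin n → ℂ) = P j := by
        funext l
        rw [hP, permMatrix_apply', hσj, Pi.single_apply]
      have hcof : ∀ q' : Fin n, (P.updateRow j (Pi.single q' 1)).det
          = if q' = q then ((Equiv.Perm.sign σ : ℤ) : ℂ) else 0 := by
        intro q'
        rcases eq_or_ne q' q with rfl | hq'
        · rw [if_pos rfl, hPj, Matrix.updateRow_eq_self, hP, Matrix.det_permutation]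
        · rw [if_neg hq']
          have hne : σ.symm q' ≠ j := by
            intro h
            exact hq' (by rw [← σ.apply_symm_apply q', h, hσj])
          refine Matrix.det_zero_of_row_eq hne ?_
          funext l
          rw [Matrix.updateRow_ne hne, Matrix.updateRow_self, hP, permMatrix_apply',
            σ.apply_symm_apply, Pi.single_apply]
      have hs : ((Equiv.Perm.sign σ : ℤ) : ℂ) ≠ 0 :=
        Int.cast_ne_zero.mpr (Units.ne_zero _)
      rw [Finset.sum_eq_single q (fun q' _ hq' => by rw [hcof, if_neg hq', mul_zero])
        (fun h => absurd (Finset.mem_univ q) h), hcof, if_pos rfl] at h0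
      exact (mul_eq_zero.mp h0).resolve_right hs
    -- diagonal entries are all equal
    have hdiag : ∀ p q : Fin n, M p p = M q q := by
      intro p q
      rcases eq_or_ne p q with rfl | hpq
      · rfl
      obtain ⟨σ, hσi, hσj⟩ := exists_perm' hij hpq
      set P : Matrix (Fin n) (Fin n) ℂ := σ.permMatrix ℂ with hP
      set u : Fin n → ℂ := Pi.single p 1 + Pi.single q 1 with hu
      set A' : Matrix (Fin n) (Fin n) ℂ := P.updateRow i u with hA'
      have h0 := hev fun kl => A' kl.1 kl.2
      have hA : (Matrix.of fun k l => A' (k, l).1 (k, l).2) = A' := rfl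
      rw [hA] at h0
      have hrowi : A' i = u := Matrix.updateRow_self
      have hw : (fun l => ∑ p', M p' l * A' i p')
          = ((Pi.single p (M p p) + Pi.single q (M q q)) : Fin n → ℂ) := by
        funext l
        rw [hrowi]
        have : ∀ p' : Fin n, M p' l * u p' =
            (if p' = p then M p l else 0) + (if p' = q then M q l else 0) := by
          intro p'
          rw [hu, Pi.add_apply, Pi.single_apply, Pi.single_apply]
          rcases eq_or_ne p' p with rfl | h1 <;> rcases eq_or_ne p' q with rfl | h2 <;>
            simp_all <;> ring
        rw [Finset.sum_congr rfl fun p' _ => this p', Finset.sum_add_distrib,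
          Finset.sum_ite_eq' Finset.univ p (fun _ => M p l),
          Finset.sum_ite_eq' Finset.univ q (fun _ => M q l)]
        have hMp : M p l = (Pi.single p (M p p) : Fin n → ℂ) l := by
          rcases eq_or_ne l p with rfl | h
          · rw [Pi.single_eq_same]
          · rw [Pi.single_eq_of_ne h, hoff p l (Ne.symm h)]
        have hMq : M q l = (Pi.single q (M q q) : Fin n → ℂ) l := by
          rcases eq_or_ne l q with rfl | h
          · rw [Pi.single_eq_same]
          · rw [Pi.single_eq_of_ne h, hoff q l (Ne.symm h)]
        simp only [Finset.mem_univ, if_true, Pi.add_apply]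
        rw [hMp, hMq]
      rw [hw] at h0
      have hsp : (Pi.single p (M p p) : Fin n → ℂ) = M p p • (Pi.single p 1 : Fin n → ℂ) := by
        funext l; rw [Pi.smul_apply, Pi.single_apply, Pi.single_apply]
        split <;> simp
      have hsq : (Pi.single q (M q q) : Fin n → ℂ) = M q q • (Pi.single q 1 : Fin n → ℂ) := by
        funext l; rw [Pi.smul_apply, Pi.single_apply, Pi.single_apply]
        split <;> simp
      rw [Matrix.det_updateRow_add, hsp, hsq, Matrix.det_updateRow_smul,
        Matrix.det_updateRow_smul] at h0
      -- compute the two cofactor determinants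
      have hPj : (Pi.single q 1 : Fin n → ℂ) = P j := by
        funext l; rw [hP, permMatrix_apply', hσj, Pi.single_apply]
      have hPi : (Pi.single p 1 : Fin n → ℂ) = P i := by
        funext l; rw [hP, permMatrix_apply', hσi, Pi.single_apply]
      have hD1 : (A'.updateRow j (Pi.single p 1)).det = -(((Equiv.Perm.sign σ : ℤ) : ℂ)) := by
        rw [hA', updateRow_comm' P hij u (Pi.single p 1), hu,
          Matrix.det_updateRow_add]
        have e1 : ((P.updateRow j (Pi.single p 1)).updateRow i (Pi.single p 1)).det = 0 := by
          refine Matrix.det_zero_of_row_eq hij ?_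
          rw [Matrix.updateRow_self, Matrix.updateRow_ne hij.symm, Matrix.updateRow_self]
        have e2 : ((P.updateRow j (Pi.single p 1)).updateRow i (Pi.single q 1)).det
            = -(((Equiv.Perm.sign σ : ℤ) : ℂ)) := by
          have hρ : (P.updateRow j (Pi.single p 1)).updateRow i (Pi.single q 1)
              = Equiv.Perm.permMatrix ℂ ((Equiv.swap i j).trans σ) := by
            ext k l
            rcases eq_or_ne k i with rfl | hki
            · rw [Matrix.updateRow_self, permMatrix_apply', Equiv.trans_apply,
                Equiv.swap_apply_left, hσj, Pi.single_apply]
            · rw [Matrix.updateRow_ne hki]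
              rcases eq_or_ne k j with rfl | hkj
              · rw [Matrix.updateRow_self, permMatrix_apply', Equiv.trans_apply,
                  Equiv.swap_apply_right, hσi, Pi.single_apply]
              · rw [Matrix.updateRow_ne hkj, hP, permMatrix_apply', permMatrix_apply',
                  Equiv.trans_apply, Equiv.swap_apply_of_ne_of_ne hki hkj]
          rw [hρ, Matrix.det_permutation]
          have : Equiv.Perm.sign ((Equiv.swap i j).trans σ)
              = Equiv.Perm.sign σ * Equiv.Perm.sign (Equiv.swap i j) := by
            rw [← Equiv.Perm.sign_mul]
            rfl
          rw [this, Equiv.Perm.sign_swap hij]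
          push_cast
          ring
        rw [e1, e2, zero_add]
      have hD2 : (A'.updateRow j (Pi.single q 1)).det = ((Equiv.Perm.sign σ : ℤ) : ℂ) := by
        have e0 : P.updateRow j (Pi.single q 1) = P := by
          rw [hPj, Matrix.updateRow_eq_self]
        have e1 : (P.updateRow i (Pi.single p 1)).det = ((Equiv.Perm.sign σ : ℤ) : ℂ) := by
          rw [hPi, Matrix.updateRow_eq_self, hP, Matrix.det_permutation]
        have e2 : (P.updateRow i (Pi.single q 1)).det = 0 := by
          refine Matrix.det_zero_of_row_eq hij ?_
          rw [Matrix.updateRow_self, Matrix.updateRow_ne hij.symm, hPj]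
        rw [hA', updateRow_comm' P hij u (Pi.single q 1), e0, hu,
          Matrix.det_updateRow_add, e1, e2, add_zero]
      rw [hD1, hD2] at h0
      have hs : ((Equiv.Perm.sign σ : ℤ) : ℂ) ≠ 0 :=
        Int.cast_ne_zero.mpr (Units.ne_zero _)
      have : ((Equiv.Perm.sign σ : ℤ) : ℂ) * (M q q - M p p) = 0 := by
        rw [← h0]; ring
      have := (mul_eq_zero.mp this).resolve_left hs
      linear_combination -this
    refine ⟨M i i, ?_⟩
    ext p q
    rcases eq_or_ne p q with rfl | hpq
    · rw [Matrix.smul_apply, Matrix.one_apply_eq, smul_eq_mul, mul_one, hdiag p i]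
    · rw [Matrix.smul_apply, Matrix.one_apply_ne hpq, smul_eq_mul, mul_zero, hoff p q hpq]
  · rintro ⟨κ, rfl⟩
    refine MvPolynomial.funext fun A => ?_
    rw [eval_main, map_zero]
    set B : Matrix (Fin n) (Fin n) ℂ := Matrix.of fun k l => A (k, l) with hB
    have hw : (fun l => ∑ p, (κ • (1 : Matrix (Fin n) (Fin n) ℂ)) p l * A (i, p))
        = κ • B i := by
      funext l
      rw [Finset.sum_eq_single l]
      · rw [Matrix.smul_apply, Matrix.one_apply_eq, smul_eq_mul, mul_one, Pi.smul_apply,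
          smul_eq_mul]
        rfl
      · intro p _ hp
        rw [Matrix.smul_apply, Matrix.one_apply_ne hp, smul_eq_mul, mul_zero, zero_mul]
      · exact fun h => absurd (Finset.mem_univ l) h
    rw [hw, Matrix.det_updateRow_smul, Matrix.det_updateRow_eq_zero hij, mul_zero]
end

section
/- Let I ⊆ C[Mat_n(C)^m] be the ideal of polynomials vanishing on SING_{n,m} = {(X_1,...,X_m) : det(Σ c_i X_i) = 0 for all c ∈ C^m}. Then I contains no nonzero homogeneous polynomial of degree d < n. -/
set_option maxHeartbeats 1000000


open MvPolynomial

theorem stmt_13 (n m d : ℕ) (hd : d < n)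
    (f : MvPolynomial (Fin m × Fin n × Fin n) ℂ) (hf : f.IsHomogeneous d)
    (hvan : ∀ X : Fin m → Matrix (Fin n) (Fin n) ℂ,
      (∀ c : Fin m → ℂ, (∑ i : Fin m, c i • X i).det = 0) →
      eval (fun p : Fin m × Fin n × Fin n => X p.1 p.2.1 p.2.2) f = 0) :
    f = 0 := by
  by_contra hne
  obtain ⟨σ, hσ⟩ := MvPolynomial.support_nonempty.mpr hne
  have hσc : coeff σ f ≠ 0 := MvPolynomial.mem_support_iff.mp hσ
  have hdeg : (∑ p ∈ σ.support, σ p) = d := by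
    have := hf hσc
    simpa [Finsupp.weight_apply, Finsupp.sum, smul_eq_mul] using this
  -- every row index appears in σ
  have hrow : ∀ r : Fin n, ∃ p ∈ σ.support, p.2.1 = r := by
    intro r
    by_contra hno
    push_neg at hno
    set h : (Fin m × Fin n × Fin n) → MvPolynomial (Fin m × Fin n × Fin n) ℂ :=
      fun p => if p.2.1 = r then 0 else X p with hh
    have hg : eval₂ C h f = 0 := by
      apply MvPolynomial.funext
      intro x
      rw [map_zero, eval₂_comp_left (eval x) C h f]
      have h1 : (eval x).comp C = RingHom.id ℂ := by ext a; simp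
      rw [h1, eval₂_id]
      have h2 : (⇑(eval x) ∘ h) =
          (fun p : Fin m × Fin n × Fin n =>
            (fun k => fun i j => if i = r then 0 else x (k, i, j)) p.1 p.2.1 p.2.2) := by
        funext p
        simp only [Function.comp_apply, hh]
        split <;> simp
      rw [h2]
      refine hvan (fun k => fun i j => if i = r then 0 else x (k, i, j)) ?_
      intro c
      apply Matrix.det_eq_zero_of_row_eq_zero r
      intro j
      simp only [Matrix.sum_apply]
      refine Finset.sum_eq_zero fun k _ => ?_
      change c k • (if r = r then (0:ℂ) else x (k, r, j)) = 0
      simp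
    -- compute coeff σ of eval₂ C h f
    have hc : coeff σ (eval₂ C h f) = coeff σ f := by
      rw [eval₂_eq, coeff_sum]
      rw [Finset.sum_eq_single σ]
      · have : ∀ p ∈ σ.support, h p ^ σ p = X p ^ σ p := by
          intro p hp
          have : p.2.1 ≠ r := fun he => hno p hp he
          simp [hh, this]
        rw [Finset.prod_congr rfl this]
        have := (monomial_eq (s := σ) (a := coeff σ f)).symm
        rw [Finsupp.prod] at this
        rw [this, coeff_monomial, if_pos rfl]
      · intro τ hτ hne
        by_cases hhit : ∃ p ∈ τ.support, p.2.1 = r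
        · obtain ⟨p, hp, hpr⟩ := hhit
          have hz : h p ^ τ p = 0 := by
            rw [hh]
            simp only [hpr, if_pos rfl]
            exact zero_pow (Finsupp.mem_support_iff.mp hp)
          rw [Finset.prod_eq_zero hp hz, mul_zero, coeff_zero]
        · push_neg at hhit
          have : ∀ p ∈ τ.support, h p ^ τ p = X p ^ τ p := by
            intro p hp
            have : p.2.1 ≠ r := fun he => hhit p hp he
            simp [hh, this]
          rw [Finset.prod_congr rfl this]
          have hm := (monomial_eq (s := τ) (a := coeff τ f)).symm
          rw [Finsupp.prod] at hm
          rw [hm, coeff_monomial, if_neg hne]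
      · intro hσn
        exact absurd hσ hσn
    rw [hg, coeff_zero] at hc
    exact hσc hc.symm
  -- counting: rows are surjective, so support has at least n elements
  have hcard : n ≤ σ.support.card := by
    have hsurj : Set.SurjOn (fun p : Fin m × Fin n × Fin n => p.2.1)
        (σ.support : Set (Fin m × Fin n × Fin n)) (Finset.univ : Finset (Fin n)) := by
      intro r _
      obtain ⟨p, hp, hpr⟩ := hrow r
      exact ⟨p, hp, hpr⟩
    have := Finset.card_le_card_of_surjOn (fun p : Fin m × Fin n × Fin n => p.2.1) hsurj
    simpa using this
  have hsum : σ.support.card ≤ ∑ p ∈ σ.support, σ p := by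
    calc σ.support.card = ∑ _p ∈ σ.support, 1 := by simp
    _ ≤ ∑ p ∈ σ.support, σ p :=
        Finset.sum_le_sum fun p hp => Nat.one_le_iff_ne_zero.mpr (Finsupp.mem_support_iff.mp hp)
  omega
end
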